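/- Let A and G be Q-projective resolutions of R = Q/I and of an R-module M, with A∞-structures m and m^G. The degree-zero map φ = s·m_2^G restricted to A_{≥1}[1] ⊗ G_0 → G_{≥1}[1] is a morphism of complexes (where A_{≥1}[1] ⊗ G_0 carries differential m_1 ⊗ 1), and there is a quasi-isomorphism cone(φ)[−2] → Syz^R(M) := ker(R ⊗ G_0 → M); hence cone(φ)[−2] is a Q-projective resolution of the first R-syzygy of M. -/

import Mathlib

/-!
On `A_{≥1} ⊗ G_0` the action `m₁^G` vanishes, so the Stasheff relation
`m₁^G m₂^G + m₂^G (m₁ ⊗ 1 + 1 ⊗ m₁^G) = d₁ ⊗ 1` reduces to two facts: `φ = s m₂^G` commutes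
with the differentials in positive degrees, and on `A_1 ⊗ G_0` the composite `d^G ∘ φ` is
`x ⊗ g ↦ d₁(x) g`, whose image is `I G_0` because `d₁(A_1) = I`.

As `G_0` is flat, `A_{≥1} ⊗ G_0` stays exact, and the usual mapping-cone argument against the
exact complex `G_{≥1}` gives exactness of `cone(φ)[-2]` in positive degrees. In degree zero,
`y ∈ G_1` is killed by `y ↦ 1 ⊗ d y` iff `d y ∈ I G_0 = d φ(A_1 ⊗ G_0)`, i.e. iff `y` lies in
`φ(A_1 ⊗ G_0) + d G_2`; surjectivity onto `Syz^R(M)` holds because every element of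
`R ⊗ G_0` is some `1 ⊗ g`, and `g ∈ ker ε_G = d G_1`.
-/

open scoped DirectSum TensorProduct
open Function LinearMap

namespace Golod

structure Cx (Q : Type) [CommRing Q] : Type 1 where
  X : ℕ → Type
  [acg : ∀ i, AddCommGroup (X i)]
  [mod : ∀ i, Module Q (X i)]
  d : ∀ i, X (i + 1) →ₗ[Q] X i

attribute [instance] Cx.acg Cx.mod

variable {Q : Type} [CommRing Q]

/-- The positive part `A_{≥1}`, reindexed so that index `i` holds `A_{i+1}`. -/
abbrev Cx.plus (C : Cx Q) : Type := ⨁ i : ℕ, C.X (i + 1)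

/-- The total module of a complex. -/
abbrev Cx.total (C : Cx Q) : Type := ⨁ i : ℕ, C.X i

def Cx.incl (C : Cx Q) (i : ℕ) : C.X (i + 1) →ₗ[Q] C.plus :=
  DirectSum.lof Q ℕ (fun j => C.X (j + 1)) i

def Cx.inclT (C : Cx Q) (i : ℕ) : C.X i →ₗ[Q] C.total :=
  DirectSum.lof Q ℕ (fun j => C.X j) i

def Cx.IsComplex (C : Cx Q) : Prop := ∀ i, (C.d i).comp (C.d (i + 1)) = 0

def Cx.IsRes (C : Cx Q) (M : Type) [AddCommGroup M] [Module Q M]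
    (ε : C.X 0 →ₗ[Q] M) : Prop :=
  C.IsComplex ∧ Surjective ε ∧ range (C.d 0) = ker ε ∧
    ∀ i, range (C.d (i + 1)) = ker (C.d i)

def Cx.IsProjRes (C : Cx Q) (M : Type) [AddCommGroup M] [Module Q M]
    (ε : C.X 0 →ₗ[Q] M) : Prop :=
  C.IsRes M ε ∧ ∀ i, Module.Projective Q (C.X i)

/-- Minimality of a complex over a local ring with maximal ideal `𝔫`. -/
def Cx.Min (C : Cx Q) (𝔫 : Ideal Q) : Prop :=
  ∀ i x, C.d i x ∈ 𝔫 • (⊤ : Submodule Q (C.X i))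

/-- The curvature term `d_1^A : A_1 → A_0 = Q`, viewed on all of `A_{≥1}`. -/
def Cx.d1 (C : Cx Q) (e0 : C.X 0 ≃ₗ[Q] Q) : ∀ i, C.X (i + 1) → Q
  | 0, x => e0 (C.d 0 x)
  | _ + 1, _ => 0

/-- The data of a family of multilinear "higher multiplication" maps on `A_{≥1}[1]`. -/
def AAlgStr (C : Cx Q) : Type :=
  ∀ n : ℕ, MultilinearMap Q (fun _ : Fin n => C.plus) C.plus

/-- The data of a family of multilinear "higher action" maps, `mG k` corresponding to
`m_{k+1}^G : (A_{≥1}[1])^{⊗ k} ⊗ G → G`. -/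
def AModStr (C : Cx Q) (G : Cx Q) : Type :=
  ∀ k : ℕ, MultilinearMap Q (fun _ : Fin k => C.plus) (G.total →ₗ[Q] G.total)

/-- The curved Stasheff relations making `(m_n)` an A∞-algebra structure on a
`Q`-projective resolution `A` of `R = Q/I` with `A_0 = Q` (via `e0`). -/
def IsAInfAlg (C : Cx Q) (e0 : C.X 0 ≃ₗ[Q] Q) (m : AAlgStr C) : Prop :=
  -- each `m_n` has degree `-1` on `A_{≥1}[1]`
  (∀ n : ℕ, 0 < n → ∀ (a : ℕ → ℕ) (x : ∀ l, C.X (a l + 1)),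
      m n (fun j : Fin n => C.incl (a j) (x j)) ∈
        Set.range (C.incl ((∑ l ∈ Finset.range n, a l) + 2 * n - 3)))
  -- `m_1 = d^{A[1]}` restricted to `A_{≥1}[1]`
  ∧ (∀ (i : ℕ) (x : C.X (i + 2)), m 1 (fun _ => C.incl (i + 1) x) = - C.incl i (C.d (i + 1) x))
  ∧ (∀ x : C.X 1, m 1 (fun _ => C.incl 0 x) = 0)
  -- the curved relation `m₁m₂ + m₂(m₁⊗1 + 1⊗m₁) = d₁ ⊗ 1 - 1 ⊗ d₁`
  ∧ (∀ (a : ℕ → ℕ) (x : ∀ l, C.X (a l + 1)),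
      m 1 (fun _ => m 2 ![C.incl (a 0) (x 0), C.incl (a 1) (x 1)])
        + m 2 ![m 1 (fun _ => C.incl (a 0) (x 0)), C.incl (a 1) (x 1)]
        + ((-1 : ℤ) ^ (a 0)) • m 2 ![C.incl (a 0) (x 0), m 1 (fun _ => C.incl (a 1) (x 1))]
      = C.d1 e0 (a 0) (x 0) • C.incl (a 1) (x 1)
        - C.d1 e0 (a 1) (x 1) • C.incl (a 0) (x 0))
  -- the Stasheff relations for `n ≥ 3`
  ∧ (∀ n : ℕ, 3 ≤ n → ∀ (a : ℕ → ℕ) (x : ∀ l, C.X (a l + 1)),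
      (∑ i ∈ Finset.Icc 1 n, ∑ j ∈ Finset.range (n - i + 1),
        ((-1 : ℤ) ^ (∑ l ∈ Finset.range j, a l)) •
          m (n - i + 1) (fun k : Fin (n - i + 1) =>
            if (k : ℕ) < j then C.incl (a k) (x k)
            else if (k : ℕ) = j then
              m i (fun l : Fin i => C.incl (a (j + (l : ℕ))) (x (j + (l : ℕ))))
            else C.incl (a ((k : ℕ) + i - 1)) (x ((k : ℕ) + i - 1)))) = 0)

/-- The curved Stasheff relations making `(m_n^G)` an A∞ `A`-module structure on a
`Q`-projective resolution `G` of the `R`-module `M`; `mG k` is `m_{k+1}^G`. -/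
def IsAInfMod (C : Cx Q) (e0 : C.X 0 ≃ₗ[Q] Q) (m : AAlgStr C) (G : Cx Q)
    (mG : AModStr C G) : Prop :=
  -- degree `-1`
  (∀ (k : ℕ) (a : ℕ → ℕ) (x : ∀ l, C.X (a l + 1)) (g : ℕ) (y : G.X g),
      mG k (fun j : Fin k => C.incl (a j) (x j)) (G.inclT g y) ∈
        Set.range (G.inclT ((∑ l ∈ Finset.range k, a l) + 2 * k + g - 1)))
  -- `m_1^G = d^G`
  ∧ (∀ (i : ℕ) (y : G.X (i + 1)), mG 0 ![] (G.inclT (i + 1) y) = G.inclT i (G.d i y))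
  ∧ (∀ y : G.X 0, mG 0 ![] (G.inclT 0 y) = 0)
  -- `m₁^G m₂^G + m₂^G(m₁ ⊗ 1 + 1 ⊗ m₁^G) = d₁^A ⊗ 1`
  ∧ (∀ (a : ℕ → ℕ) (x : ∀ l, C.X (a l + 1)) (g : ℕ) (y : G.X g),
      mG 0 ![] (mG 1 ![C.incl (a 0) (x 0)] (G.inclT g y))
        + mG 1 ![m 1 (fun _ => C.incl (a 0) (x 0))] (G.inclT g y)
        + ((-1 : ℤ) ^ (a 0)) • mG 1 ![C.incl (a 0) (x 0)] (mG 0 ![] (G.inclT g y))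
      = C.d1 e0 (a 0) (x 0) • G.inclT g y)
  -- the module Stasheff relations for `n ≥ 3`
  ∧ (∀ n : ℕ, 3 ≤ n → ∀ (a : ℕ → ℕ) (x : ∀ l, C.X (a l + 1)) (g : ℕ) (y : G.X g),
      (∑ i ∈ Finset.Icc 1 n,
        ((∑ j ∈ Finset.range (n - i),
          ((-1 : ℤ) ^ (∑ l ∈ Finset.range j, a l)) •
            mG (n - i) (fun k : Fin (n - i) =>
              if (k : ℕ) < j then C.incl (a k) (x k)
              else if (k : ℕ) = j then
                m i (fun l : Fin i => C.incl (a (j + (l : ℕ))) (x (j + (l : ℕ))))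
              else C.incl (a ((k : ℕ) + i - 1)) (x ((k : ℕ) + i - 1)))
              (G.inclT g y))
          + ((-1 : ℤ) ^ (∑ l ∈ Finset.range (n - i), a l)) •
            mG (n - i) (fun k : Fin (n - i) => C.incl (a k) (x k))
              ((mG (i - 1) (fun l : Fin (i - 1) =>
                  C.incl (a (n - i + (l : ℕ))) (x (n - i + (l : ℕ)))))
                (G.inclT g y)))) = 0)

/-- Minimality of an A∞-algebra structure: `m_n ⊗ k = 0` for all `n ≥ 2`. -/
def AAlgStr.Min {C : Cx Q} (m : AAlgStr C) (𝔫 : Ideal Q) : Prop :=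
  ∀ n, 2 ≤ n → ∀ v, m n v ∈ 𝔫 • (⊤ : Submodule Q C.plus)

/-- Minimality of an A∞-module structure: `m_n^G ⊗ k = 0` for all `n ≥ 2`. -/
def AModStr.Min {C G : Cx Q} (mG : AModStr C G) (𝔫 : Ideal Q) : Prop :=
  ∀ k, 1 ≤ k → ∀ v y, mG k v y ∈ 𝔫 • (⊤ : Submodule Q G.total)


section Syzygy

variable {Q : Type} [CommRing Q]

/-- Projection onto the component `A_{i+1}` of `A_{≥1}`. -/
def compP (C : Cx Q) (i : ℕ) : C.plus →ₗ[Q] C.X (i + 1) :=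
  DirectSum.component Q ℕ (fun j => C.X (j + 1)) i

/-- Projection onto the component `G_i` of the total module. -/
def compT (G : Cx Q) (i : ℕ) : G.total →ₗ[Q] G.X i :=
  DirectSum.component Q ℕ (fun j => G.X j) i

/-- `m₂^G` as a linear map `A_{≥1}[1] → End(G)`. -/
noncomputable def m2lin (C G : Cx Q) (mG : AModStr C G) :
    C.plus →ₗ[Q] (G.total →ₗ[Q] G.total) :=
  (MultilinearMap.ofSubsingleton Q C.plus (G.total →ₗ[Q] G.total) (0 : Fin 1)).symm (mG 1)

/-- The bilinear map `A_{j+1} → G_0 → G_{j+1}` given by `(x, g) ↦ m₂^G(x ⊗ g)`;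
this is the degree-`(j+1)` component of `φ = s m₂^G`. -/
noncomputable def smB (C G : Cx Q) (mG : AModStr C G) (j : ℕ) :
    C.X (j + 1) →ₗ[Q] (G.X 0 →ₗ[Q] G.X (j + 1)) :=
  ((LinearMap.llcomp Q (G.X 0) G.total (G.X (j + 1)) (compT G (j + 1))).comp
      (LinearMap.lcomp Q G.total (G.inclT 0))).comp
    ((m2lin C G mG).comp (C.incl j))

/-- The underlying graded module of the syzygy complex `cone(φ)[-2]`:
`Syz(G)_0 = G_1` and `Syz(G)_{j+1} = (A_{j+1} ⊗ G_0) ⊕ G_{j+2}`. -/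
def syzX (C G : Cx Q) : ℕ → Type
  | 0 => G.X 1
  | j + 1 => (C.X (j + 1) ⊗[Q] G.X 0) × G.X (j + 2)

noncomputable def syzXacg (C G : Cx Q) : ∀ n, AddCommGroup (syzX C G n)
  | 0 => inferInstanceAs (AddCommGroup (G.X 1))
  | j + 1 => inferInstanceAs (AddCommGroup ((C.X (j + 1) ⊗[Q] G.X 0) × G.X (j + 2)))

noncomputable instance (C G : Cx Q) (n : ℕ) : AddCommGroup (syzX C G n) := syzXacg C G n

noncomputable def syzXmod (C G : Cx Q) : ∀ n, Module Q (syzX C G n)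
  | 0 => inferInstanceAs (Module Q (G.X 1))
  | j + 1 => inferInstanceAs (Module Q ((C.X (j + 1) ⊗[Q] G.X 0) × G.X (j + 2)))

noncomputable instance (C G : Cx Q) (n : ℕ) : Module Q (syzX C G n) := syzXmod C G n

/-- The differential of the syzygy complex `cone(φ)[-2]`. -/
noncomputable def syzD (C G : Cx Q) (mG : AModStr C G) :
    ∀ n, syzX C G (n + 1) →ₗ[Q] syzX C G n
  | 0 =>
      (TensorProduct.lift (smB C G mG 0)).comp (LinearMap.fst Q _ _)
        - (G.d 1).comp (LinearMap.snd Q _ _)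
  | j + 1 =>
      LinearMap.prod
        ((TensorProduct.map (C.d (j + 1)) LinearMap.id).comp (LinearMap.fst Q _ _))
        ((TensorProduct.lift (smB C G mG (j + 1))).comp (LinearMap.fst Q _ _)
          - (G.d (j + 2)).comp (LinearMap.snd Q _ _))

/-- The syzygy complex `Syz(G) = cone(φ)[-2]` of `G`, built from the
A∞ `A`-module structure on `G`. -/
noncomputable def SyzCx (C G : Cx Q) (mG : AModStr C G) : Cx Q where
  X := syzX C G
  d := syzD C G mG

end Syzygy

section Cone

variable {R : Type*} [CommRing R] {T₁ T₀ T' Y₂ Y₁ Y₀ : Type*}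
  [AddCommGroup T₁] [AddCommGroup T₀] [AddCommGroup T'] [AddCommGroup Y₂] [AddCommGroup Y₁]
  [AddCommGroup Y₀] [Module R T₁] [Module R T₀] [Module R T'] [Module R Y₂] [Module R Y₁]
  [Module R Y₀] {dT : T₁ →ₗ[R] T₀} {dY₁ : Y₂ →ₗ[R] Y₁} {dY₀ : Y₁ →ₗ[R] Y₀}
  {φ₁ : T₁ →ₗ[R] Y₁} {φ₀ : T₀ →ₗ[R] Y₀}

/- The mapping cone of a chain map `φ : T → Y`, with differential `(t, y) ↦ (d t, φ t - d y)`,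
written out in two consecutive degrees. -/
theorem cone_d_comp_d_eq_zero (hY : ∀ y, dY₀ (dY₁ y) = 0)
    (hφ : ∀ t, dY₀ (φ₁ t) = φ₀ (dT t)) (t : T₁) (y : Y₂) :
    φ₀ (dT t) - dY₀ (φ₁ t - dY₁ y) = 0 := by
  rw [map_sub, hY, hφ, sub_zero, sub_self]

theorem exists_cone_preimage {dT' : T₀ →ₗ[R] T'} (hT : Function.Exact dT dT')
    (hY : Function.Exact dY₁ dY₀) (hφ : ∀ t, dY₀ (φ₁ t) = φ₀ (dT t))
    {t : T₀} {y : Y₁} (ht : dT' t = 0) (hy : φ₀ t = dY₀ y) :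
    ∃ t' y', dT t' = t ∧ φ₁ t' - dY₁ y' = y := by
  obtain ⟨t', rfl⟩ := (hT t).mp ht
  obtain ⟨y', hy'⟩ := (hY (φ₁ t' - y)).mp (by rw [map_sub, hφ, hy, sub_self])
  exact ⟨t', y', rfl, by rw [hy', sub_sub_cancel]⟩

end Cone

section QuotientTensor

variable {R N : Type*} [CommRing R] [AddCommGroup N] [Module R N] (I : Ideal R)

theorem one_tmul_eq_zero_iff_mem_smul_top (n : N) :
    (1 : R ⧸ I) ⊗ₜ[R] n = 0 ↔ n ∈ I • (⊤ : Submodule R N) := by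
  rw [← (TensorProduct.quotTensorEquivQuotSMul N I).map_eq_zero_iff,
    TensorProduct.quotTensorEquivQuotSMul_mk_one_tmul, Submodule.Quotient.mk_eq_zero]

theorem exists_one_tmul_eq (z : (R ⧸ I) ⊗[R] N) : ∃ n : N, (1 : R ⧸ I) ⊗ₜ[R] n = z := by
  obtain ⟨n, hn⟩ := Submodule.mkQ_surjective _ (TensorProduct.quotTensorEquivQuotSMul N I z)
  refine ⟨n, ?_⟩
  rw [← TensorProduct.quotTensorEquivQuotSMul_symm_mk I, ← Submodule.mkQ_apply, hn,
    LinearEquiv.symm_apply_apply]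

theorem range_lid_comp_rTensor (f : N →ₗ[R] R) (M : Type*) [AddCommGroup M] [Module R M] :
    range (TensorProduct.lid R M ∘ₗ f.rTensor M) = range f • (⊤ : Submodule R M) := by
  apply le_antisymm
  · rintro _ ⟨t, rfl⟩
    induction t using TensorProduct.induction_on with
    | zero => simp
    | tmul n m => simpa using Submodule.smul_mem_smul (mem_range_self f n) Submodule.mem_top
    | add a b ha hb => simpa using Submodule.add_mem _ ha hb
  · refine Submodule.smul_le.mpr ?_
    rintro _ ⟨n, rfl⟩ m -
    exact ⟨n ⊗ₜ m, by simp⟩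

end QuotientTensor

section Complexes

variable {C : Cx Q} {M : Type} [AddCommGroup M] [Module Q M] {ε : C.X 0 →ₗ[Q] M}

theorem Cx.IsComplex.d_d_apply (h : C.IsComplex) (i : ℕ) (x : C.X (i + 2)) :
    C.d i (C.d (i + 1) x) = 0 :=
  LinearMap.congr_fun (h i) x

theorem Cx.IsRes.aug_d_apply (h : C.IsRes M ε) (x : C.X 1) : ε (C.d 0 x) = 0 :=
  mem_ker.mp (h.2.2.1 ▸ mem_range_self (C.d 0) x)

theorem Cx.IsRes.exact (h : C.IsRes M ε) (i : ℕ) : Function.Exact (C.d (i + 1)) (C.d i) :=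
  LinearMap.exact_iff.mpr (h.2.2.2 i).symm

theorem Cx.inclT_injective (C : Cx Q) (i : ℕ) : Injective (C.inclT i) :=
  DirectSum.of_injective i

theorem compT_inclT (C : Cx Q) (i : ℕ) (x : C.X i) : compT C i (C.inclT i x) = x :=
  DirectSum.component.lof_self Q i x

end Complexes

section AInfinity

variable {C G : Cx Q} {e0 : C.X 0 ≃ₗ[Q] Q} {mA : AAlgStr C} {mG : AModStr C G}

theorem m2lin_apply (w : C.plus) : m2lin C G mG w = mG 1 ![w] := by
  rw [show ![w] = fun _ => w from funext fun i => Matrix.cons_val_fin_one w ![] i]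
  rfl

theorem m2lin_incl_inclT_zero (hmG : IsAInfMod C e0 mA G mG) (j : ℕ) (x : C.X (j + 1))
    (g : G.X 0) :
    m2lin C G mG (C.incl j x) (G.inclT 0 g) = G.inclT (j + 1) (smB C G mG j x g) := by
  have hdeg := hmG.1 1 (fun _ => j) (fun _ => x) 0 g
  rw [show (∑ _l ∈ Finset.range 1, j) + 2 * 1 + 0 - 1 = j + 1 by simp] at hdeg
  obtain ⟨z, hz⟩ := hdeg
  change G.inclT (j + 1) z = m2lin C G mG (C.incl j x) (G.inclT 0 g) at hz
  change _ = G.inclT (j + 1) (compT G (j + 1) (m2lin C G mG (C.incl j x) (G.inclT 0 g)))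
  rw [← hz, compT_inclT]

theorem inclT_d_smB_add_m2lin (hmG : IsAInfMod C e0 mA G mG) (a : ℕ) (x : C.X (a + 1))
    (g : G.X 0) :
    G.inclT a (G.d a (smB C G mG a x g)) + m2lin C G mG (mA 1 fun _ => C.incl a x) (G.inclT 0 g)
      = C.d1 e0 a x • G.inclT 0 g := by
  have h := hmG.2.2.2.1 (fun _ => a) (fun _ => x) 0 g
  rwa [hmG.2.2.1, map_zero, smul_zero, add_zero, ← m2lin_apply, ← m2lin_apply,
    m2lin_incl_inclT_zero hmG, hmG.2.1] at h

theorem d_smB_succ (hmA : IsAInfAlg C e0 mA) (hmG : IsAInfMod C e0 mA G mG) (j : ℕ)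
    (x : C.X (j + 2)) (g : G.X 0) :
    G.d (j + 1) (smB C G mG (j + 1) x g) = smB C G mG j (C.d (j + 1) x) g := by
  have h := inclT_d_smB_add_m2lin hmG (j + 1) x g
  rw [hmA.2.1, map_neg, LinearMap.neg_apply, m2lin_incl_inclT_zero hmG, ← sub_eq_add_neg,
    show C.d1 e0 (j + 1) x = 0 from rfl, zero_smul, sub_eq_zero] at h
  exact G.inclT_injective _ h

theorem d_smB_zero (hmA : IsAInfAlg C e0 mA) (hmG : IsAInfMod C e0 mA G mG) (x : C.X 1)
    (g : G.X 0) : G.d 0 (smB C G mG 0 x g) = e0 (C.d 0 x) • g := by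
  have h := inclT_d_smB_add_m2lin hmG 0 x g
  rw [hmA.2.2.1, map_zero, LinearMap.zero_apply, add_zero, ← map_smul] at h
  exact G.inclT_injective _ h

theorem d_lift_smB_succ (hmA : IsAInfAlg C e0 mA) (hmG : IsAInfMod C e0 mA G mG) (j : ℕ)
    (t : C.X (j + 2) ⊗[Q] G.X 0) :
    G.d (j + 1) (TensorProduct.lift (smB C G mG (j + 1)) t)
      = TensorProduct.lift (smB C G mG j) ((C.d (j + 1)).rTensor (G.X 0) t) := by
  induction t using TensorProduct.induction_on with
  | zero => simp
  | tmul x g => simpa using d_smB_succ hmA hmG j x g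
  | add a b ha hb => simp [ha, hb]

theorem d_lift_smB_zero (hmA : IsAInfAlg C e0 mA) (hmG : IsAInfMod C e0 mA G mG)
    (t : C.X 1 ⊗[Q] G.X 0) :
    G.d 0 (TensorProduct.lift (smB C G mG 0) t)
      = TensorProduct.lid Q (G.X 0) (((e0 : C.X 0 →ₗ[Q] Q) ∘ₗ C.d 0).rTensor (G.X 0) t) := by
  induction t using TensorProduct.induction_on with
  | zero => simp
  | tmul x g => simpa using d_smB_zero hmA hmG x g
  | add a b ha hb => simp [ha, hb]

end AInfinity

section SyzygyComplex

variable {C G : Cx Q} {e0 : C.X 0 ≃ₗ[Q] Q} {mA : AAlgStr C} {mG : AModStr C G}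

theorem syzD_zero_apply (t : C.X 1 ⊗[Q] G.X 0) (y : G.X 2) :
    syzD C G mG 0 (t, y) = TensorProduct.lift (smB C G mG 0) t - G.d 1 y := rfl

theorem syzCx_isComplex (hmA : IsAInfAlg C e0 mA) (hmG : IsAInfMod C e0 mA G mG)
    (hC : C.IsComplex) (hG : G.IsComplex) : (SyzCx C G mG).IsComplex := by
  intro n
  apply LinearMap.ext
  cases n with
  | zero =>
    rintro ⟨t, y⟩
    exact cone_d_comp_d_eq_zero (hG.d_d_apply 1) (d_lift_smB_succ hmA hmG 0) t y
  | succ j =>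
    rintro ⟨t, y⟩
    refine Prod.ext ?_ <|
      cone_d_comp_d_eq_zero (hG.d_d_apply (j + 2)) (d_lift_smB_succ hmA hmG (j + 1)) t y
    change (C.d (j + 1)).rTensor (G.X 0) ((C.d (j + 2)).rTensor (G.X 0) t) = 0
    rw [← LinearMap.comp_apply, ← rTensor_comp, hC (j + 1), rTensor_zero, LinearMap.zero_apply]

theorem range_syzD_succ [Module.Flat Q (G.X 0)] {N M : Type} [AddCommGroup N] [Module Q N]
    [AddCommGroup M] [Module Q M] {ε : C.X 0 →ₗ[Q] N} {εG : G.X 0 →ₗ[Q] M}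
    (hmA : IsAInfAlg C e0 mA) (hmG : IsAInfMod C e0 mA G mG) (hC : C.IsRes N ε)
    (hG : G.IsRes M εG) (n : ℕ) :
    range ((SyzCx C G mG).d (n + 1)) = ker ((SyzCx C G mG).d n) := by
  refine le_antisymm (range_le_ker_iff.mpr (syzCx_isComplex hmA hmG hC.1 hG.1 n)) ?_
  cases n with
  | zero =>
    rintro ⟨t, y⟩ h
    have hy : TensorProduct.lift (smB C G mG 0) t = G.d 1 y := sub_eq_zero.mp h
    -- `Syz(G)_0` has no `A_0 ⊗ G_0` part: that `t` is a cycle comes from `d φ t = d d y = 0`.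
    have ht : ((e0 : C.X 0 →ₗ[Q] Q) ∘ₗ C.d 0).rTensor (G.X 0) t = 0 :=
      (TensorProduct.lid Q (G.X 0)).injective <| by
        rw [map_zero, ← d_lift_smB_zero hmA hmG, hy, hG.1.d_d_apply]
    have hT := (hC.exact 0).comp_injective _ e0.injective (map_zero e0)
    obtain ⟨t', y', ht', hy'⟩ := exists_cone_preimage (Module.Flat.rTensor_exact (G.X 0) hT)
      (hG.exact 1) (d_lift_smB_succ hmA hmG 0) ht hy
    exact ⟨(t', y'), Prod.ext ht' hy'⟩
  | succ j =>
    rintro ⟨t, y⟩ h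
    obtain ⟨ht, hy⟩ := Prod.ext_iff.mp h
    obtain ⟨t', y', ht', hy'⟩ := exists_cone_preimage
      (Module.Flat.rTensor_exact (G.X 0) (hC.exact (j + 1))) (hG.exact (j + 2))
      (d_lift_smB_succ hmA hmG (j + 1)) ht (sub_eq_zero.mp hy)
    exact ⟨(t', y'), Prod.ext ht' hy'⟩

end SyzygyComplex

section AugmentationMap

variable (I : Ideal Q) {M : Type} [AddCommGroup M] [Module (Q ⧸ I) M] [Module Q M]
  [IsScalarTower Q (Q ⧸ I) M]

noncomputable def syzAugmentation (G : Cx Q) (εG : G.X 0 →ₗ[Q] M) (hεG : ∀ y, εG (G.d 0 y) = 0) :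
    G.X 1 →ₗ[Q] ker (εG.liftBaseChange (Q ⧸ I)) :=
  codRestrict ((ker (εG.liftBaseChange (Q ⧸ I))).restrictScalars Q)
    (TensorProduct.mk Q (Q ⧸ I) (G.X 0) 1 ∘ₗ G.d 0) fun y => by simp [hεG]

theorem syzAugmentation_apply (G : Cx Q) (εG : G.X 0 →ₗ[Q] M) (hεG : ∀ y, εG (G.d 0 y) = 0)
    (y : G.X 1) :
    (syzAugmentation I G εG hεG y : (Q ⧸ I) ⊗[Q] G.X 0) = 1 ⊗ₜ G.d 0 y := rfl

theorem syzAugmentation_surjective {G : Cx Q} {εG : G.X 0 →ₗ[Q] M} (hG : G.IsRes M εG) :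
    Surjective (syzAugmentation I G εG hG.aug_d_apply) := by
  rintro ⟨z, hz⟩
  obtain ⟨g, rfl⟩ := exists_one_tmul_eq I z
  have hg : g ∈ ker εG := by simpa using hz
  obtain ⟨y, rfl⟩ := hG.2.2.1 ▸ hg
  exact ⟨y, Subtype.ext (syzAugmentation_apply I G εG hG.aug_d_apply y)⟩

end AugmentationMap

section AugmentationExactness

variable {I : Ideal Q} {C G : Cx Q} {e0 : C.X 0 ≃ₗ[Q] Q} {ε : C.X 0 →ₗ[Q] Q ⧸ I}
  {mA : AAlgStr C} {mG : AModStr C G}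

theorem range_e0_comp_d_zero (hcompat : ∀ x, ε x = Ideal.Quotient.mk I (e0 x))
    (hC : C.IsRes (Q ⧸ I) ε) : range ((e0 : C.X 0 →ₗ[Q] Q) ∘ₗ C.d 0) = I := by
  ext r
  constructor
  · rintro ⟨x, rfl⟩
    rw [← Ideal.Quotient.eq_zero_iff_mem, LinearMap.comp_apply, LinearEquiv.coe_coe, ← hcompat]
    exact hC.aug_d_apply x
  · intro hr
    have : e0.symm r ∈ ker ε := by
      rw [mem_ker, hcompat, LinearEquiv.apply_symm_apply, Ideal.Quotient.eq_zero_iff_mem]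
      exact hr
    obtain ⟨x, hx⟩ := hC.2.2.1 ▸ this
    exact ⟨x, by simp [hx]⟩

theorem range_d_zero_comp_lift_smB_zero (hcompat : ∀ x, ε x = Ideal.Quotient.mk I (e0 x))
    (hC : C.IsRes (Q ⧸ I) ε) (hmA : IsAInfAlg C e0 mA) (hmG : IsAInfMod C e0 mA G mG) :
    range (G.d 0 ∘ₗ TensorProduct.lift (smB C G mG 0)) = I • (⊤ : Submodule Q (G.X 0)) := by
  rw [← range_e0_comp_d_zero hcompat hC, ← range_lid_comp_rTensor]
  congr 1
  exact TensorProduct.ext' fun x g => d_lift_smB_zero hmA hmG (x ⊗ₜ g)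

variable {M : Type} [AddCommGroup M] [Module (Q ⧸ I) M] [Module Q M]
  [IsScalarTower Q (Q ⧸ I) M] {εG : G.X 0 →ₗ[Q] M}

theorem syzAugmentation_eq_zero_iff (hcompat : ∀ x, ε x = Ideal.Quotient.mk I (e0 x))
    (hC : C.IsRes (Q ⧸ I) ε) (hmA : IsAInfAlg C e0 mA) (hmG : IsAInfMod C e0 mA G mG)
    (hεG : ∀ y, εG (G.d 0 y) = 0) (y : G.X 1) :
    syzAugmentation I G εG hεG y = 0 ↔
      G.d 0 y ∈ range (G.d 0 ∘ₗ TensorProduct.lift (smB C G mG 0)) := by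
  rw [range_d_zero_comp_lift_smB_zero hcompat hC hmA hmG, ← one_tmul_eq_zero_iff_mem_smul_top,
    ← syzAugmentation_apply I G εG hεG, Submodule.coe_eq_zero]

theorem syzAugmentation_syzD_zero (hcompat : ∀ x, ε x = Ideal.Quotient.mk I (e0 x))
    (hC : C.IsRes (Q ⧸ I) ε) (hG : G.IsRes M εG) (hmA : IsAInfAlg C e0 mA)
    (hmG : IsAInfMod C e0 mA G mG) (s : syzX C G 1) :
    syzAugmentation I G εG hG.aug_d_apply (syzD C G mG 0 s) = 0 := by
  obtain ⟨t, y⟩ := s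
  refine (syzAugmentation_eq_zero_iff hcompat hC hmA hmG hG.aug_d_apply _).mpr ⟨t, ?_⟩
  rw [syzD_zero_apply, map_sub, hG.1.d_d_apply, sub_zero, LinearMap.comp_apply]

theorem exists_syzD_zero_eq (hcompat : ∀ x, ε x = Ideal.Quotient.mk I (e0 x))
    (hC : C.IsRes (Q ⧸ I) ε) (hG : G.IsRes M εG) (hmA : IsAInfAlg C e0 mA)
    (hmG : IsAInfMod C e0 mA G mG) {y : G.X 1}
    (hy : syzAugmentation I G εG hG.aug_d_apply y = 0) :
    ∃ s, syzD C G mG 0 s = y := by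
  obtain ⟨t, ht⟩ := (syzAugmentation_eq_zero_iff hcompat hC hmA hmG hG.aug_d_apply y).mp hy
  obtain ⟨y', hy'⟩ := (hG.exact 0 (y - TensorProduct.lift (smB C G mG 0) t)).mp <| by
    rw [map_sub, ← LinearMap.comp_apply, ht, sub_self]
  refine ⟨(t, -y'), ?_⟩
  rw [syzD_zero_apply, map_neg, sub_neg_eq_add, hy', add_sub_cancel]

theorem range_syzD_zero (hcompat : ∀ x, ε x = Ideal.Quotient.mk I (e0 x))
    (hC : C.IsRes (Q ⧸ I) ε) (hG : G.IsRes M εG) (hmA : IsAInfAlg C e0 mA)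
    (hmG : IsAInfMod C e0 mA G mG) :
    range ((SyzCx C G mG).d 0) = ker (syzAugmentation I G εG hG.aug_d_apply) :=
  le_antisymm (fun _ ⟨s, hs⟩ => hs ▸ syzAugmentation_syzD_zero hcompat hC hG hmA hmG s)
    fun _ hy => exists_syzD_zero_eq hcompat hC hG hmA hmG hy

end AugmentationExactness

section Projective

variable {C G : Cx Q}

theorem syzX_projective (hC : ∀ i, Module.Projective Q (C.X i))
    (hG : ∀ i, Module.Projective Q (G.X i)) : ∀ n, Module.Projective Q (syzX C G n)
  | 0 => hG 1
  | j + 1 =>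
    have := hC (j + 1)
    have := hG 0
    have := hG (j + 2)
    inferInstanceAs (Module.Projective Q ((C.X (j + 1) ⊗[Q] G.X 0) × G.X (j + 2)))

end Projective

/-- The map `φ = s m₂^G : A_{≥1}[1] ⊗ G_0 → G_{≥1}[1]` is a
morphism of complexes, and `cone(φ)[-2]` is a `Q`-projective resolution of the
first syzygy `Syz^R(M) = ker(R ⊗ G_0 → M)`. -/
theorem syzygy_complex_resolves_syzygy (Q : Type) [CommRing Q] (I : Ideal Q)
    (M : Type) [AddCommGroup M] [Module (Q ⧸ I) M] [Module Q M]
    [IsScalarTower Q (Q ⧸ I) M]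
    (C : Cx Q) (e0 : C.X 0 ≃ₗ[Q] Q) (ε : C.X 0 →ₗ[Q] Q ⧸ I)
    (hcompat : ∀ x, ε x = Ideal.Quotient.mk I (e0 x))
    (hres : C.IsProjRes (Q ⧸ I) ε)
    (mA : AAlgStr C) (hmA : IsAInfAlg C e0 mA)
    (G : Cx Q) (εG : G.X 0 →ₗ[Q] M) (hG : G.IsProjRes M εG)
    (mG : AModStr C G) (hmG : IsAInfMod C e0 mA G mG) :
    -- `φ` is a morphism of complexes
    (∀ (j : ℕ) (x : C.X (j + 2)) (g : G.X 0),
        G.d (j + 1) (smB C G mG (j + 1) x g) = smB C G mG j (C.d (j + 1) x) g)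
    -- and `cone(φ)[-2]` is a `Q`-projective resolution of `Syz^R(M)`
    ∧ (∃ εS : (SyzCx C G mG).X 0 →ₗ[Q]
          ↥(LinearMap.ker (εG.liftBaseChange (Q ⧸ I))),
        (∀ y : G.X 1,
          ((εS y : (Q ⧸ I) ⊗[Q] G.X 0)) = (1 : Q ⧸ I) ⊗ₜ[Q] (G.d 0 y))
        ∧ (SyzCx C G mG).IsRes ↥(LinearMap.ker (εG.liftBaseChange (Q ⧸ I))) εS
        ∧ ∀ n, Module.Projective Q (syzX C G n)) := by
  obtain ⟨hCres, hCproj⟩ := hres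
  obtain ⟨hGres, hGproj⟩ := hG
  have : Module.Projective Q (G.X 0) := hGproj 0
  refine ⟨d_smB_succ hmA hmG, syzAugmentation I G εG hGres.aug_d_apply,
    syzAugmentation_apply I G εG hGres.aug_d_apply, ⟨syzCx_isComplex hmA hmG hCres.1 hGres.1,
    syzAugmentation_surjective I hGres, range_syzD_zero hcompat hCres hGres hmA hmG,
    range_syzD_succ hmA hmG hCres hGres⟩, syzX_projective hCproj hGproj⟩

end Golod
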